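/- Two overshear vector fields OF_{f₁,g₁} and OF_{f₂,g₂} commute if and only if f₁g₂ − f₂g₁ ≡ 0, i.e., either both f₁ and f₂ are identically zero, or the pairs (f₁,g₁) and (f₂,g₂) are proportional as meromorphic data (g₁/f₁ = g₂/f₂ where defined). -/

import Mathlib

open Polynomial

/-- The Lie bracket of vector fields on `ℂ³` (written in coordinates, as maps
`ℂ³ → ℂ³`): `[V, W](q) = DW(q)·V(q) − DV(q)·W(q)`, so that `[V,W] = V∘W − W∘V` as
derivations on functions. -/
noncomputable def vfBracket (V W : ℂ × ℂ × ℂ → ℂ × ℂ × ℂ) (q : ℂ × ℂ × ℂ) : ℂ × ℂ × ℂ :=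
  fderiv ℂ W q (V q) - fderiv ℂ V q (W q)

/-- The overshear vector field
`OF_{f,g} = p'(z)(z f(x) + g(x)) ∂/∂y + x (z f(x) + g(x)) ∂/∂z`
in coordinates `(x, y, z)` on `ℂ³`. -/
noncomputable def OF (p : Polynomial ℂ) (f g : ℂ → ℂ) (q : ℂ × ℂ × ℂ) : ℂ × ℂ × ℂ :=
  (0, (p.derivative.eval q.2.2) * (q.2.2 * f q.1 + g q.1),
    q.1 * (q.2.2 * f q.1 + g q.1))

/-- The shear vector field `SF_m = p'(z) m(x) ∂/∂y + x m(x) ∂/∂z`, i.e. `OF_{0,m}`. -/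
noncomputable def SF (p : Polynomial ℂ) (m : ℂ → ℂ) (q : ℂ × ℂ × ℂ) : ℂ × ℂ × ℂ :=
  (0, (p.derivative.eval q.2.2) * m q.1, q.1 * m q.1)

lemma OF_diff (p : Polynomial ℂ) (f g : ℂ → ℂ) (hf : Differentiable ℂ f)
    (hg : Differentiable ℂ g) : Differentiable ℂ (OF p f g) := by
  have h1 : Differentiable ℂ (fun q : ℂ × ℂ × ℂ => q.1) := differentiable_fst
  have h2 : Differentiable ℂ (fun q : ℂ × ℂ × ℂ => q.2.2) := differentiable_snd.snd
  have hu : Differentiable ℂ (fun q : ℂ × ℂ × ℂ => q.2.2 * f q.1 + g q.1) :=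
    (h2.mul (hf.comp h1)).add (hg.comp h1)
  have hP : Differentiable ℂ (fun q : ℂ × ℂ × ℂ => p.derivative.eval q.2.2) :=
    (p.derivative.differentiable).comp h2
  exact (differentiable_const _).prodMk ((hP.mul hu).prodMk (h1.mul hu))

lemma OF_fderiv_apply (p : Polynomial ℂ) (f g : ℂ → ℂ) (hf : Differentiable ℂ f)
    (hg : Differentiable ℂ g) (q : ℂ × ℂ × ℂ) (a b : ℂ) :
    fderiv ℂ (OF p f g) q (0, a, b) =
      (0, p.derivative.derivative.eval q.2.2 * b * (q.2.2 * f q.1 + g q.1)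
            + p.derivative.eval q.2.2 * (b * f q.1),
          q.1 * (b * f q.1)) := by
  set v : ℂ × ℂ × ℂ := (0, a, b) with hv
  have hc : HasDerivAt (fun t : ℂ => q + t • v) v 0 := by
    simpa using ((hasDerivAt_id (0:ℂ)).smul_const v).const_add q
  have hcomp : HasDerivAt (fun t : ℂ => OF p f g (q + t • v))
      (fderiv ℂ (OF p f g) q v) 0 := by
    have hq : HasFDerivAt (OF p f g) (fderiv ℂ (OF p f g) q) (q + (0:ℂ) • v) := by
      simpa using (OF_diff p f g hf hg q).hasFDerivAt
    have := hq.comp_hasDerivAt 0 hc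
    simpa [Function.comp_def] using this
  have hz : HasDerivAt (fun t : ℂ => q.2.2 + t * b) b 0 := by
    simpa using ((hasDerivAt_id (0:ℂ)).mul_const b).const_add q.2.2
  have hP : HasDerivAt (fun t : ℂ => p.derivative.eval (q.2.2 + t * b))
      (p.derivative.derivative.eval q.2.2 * b) 0 := by
    have := (p.derivative.hasDerivAt (q.2.2 + 0 * b)).comp 0 hz
    simpa [Function.comp_def] using this
  have hu : HasDerivAt (fun t : ℂ => (q.2.2 + t * b) * f q.1 + g q.1)
      (b * f q.1) 0 := (hz.mul_const (f q.1)).add_const (g q.1)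
  have hF : HasDerivAt
      (fun t : ℂ => p.derivative.eval (q.2.2 + t * b) * ((q.2.2 + t * b) * f q.1 + g q.1))
      (p.derivative.derivative.eval q.2.2 * b * (q.2.2 * f q.1 + g q.1)
        + p.derivative.eval q.2.2 * (b * f q.1)) 0 := by
    have := hP.mul hu
    simpa [Pi.mul_def] using this
  have hG : HasDerivAt (fun t : ℂ => q.1 * ((q.2.2 + t * b) * f q.1 + g q.1))
      (q.1 * (b * f q.1)) 0 := hu.const_mul q.1
  have hexp : HasDerivAt (fun t : ℂ => OF p f g (q + t • v))
      ((0 : ℂ), p.derivative.derivative.eval q.2.2 * b * (q.2.2 * f q.1 + g q.1)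
            + p.derivative.eval q.2.2 * (b * f q.1),
          q.1 * (b * f q.1)) 0 := by
    have h0 : HasDerivAt (fun _ : ℂ => (0:ℂ)) 0 0 := hasDerivAt_const 0 0
    have := h0.prodMk (hF.prodMk hG)
    convert this using 2 with t
    simp [OF, hv, Prod.ext_iff]
  exact hcomp.unique hexp

lemma OF_bracket_eval (p : Polynomial ℂ) (f₁ g₁ f₂ g₂ : ℂ → ℂ)
    (hf₁ : Differentiable ℂ f₁) (hg₁ : Differentiable ℂ g₁)
    (hf₂ : Differentiable ℂ f₂) (hg₂ : Differentiable ℂ g₂) (q : ℂ × ℂ × ℂ) :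
    vfBracket (OF p f₁ g₁) (OF p f₂ g₂) q =
      (0, -(q.1 * p.derivative.eval q.2.2 * (f₁ q.1 * g₂ q.1 - f₂ q.1 * g₁ q.1)),
        -(q.1 * q.1 * (f₁ q.1 * g₂ q.1 - f₂ q.1 * g₁ q.1))) := by
  have e1 : fderiv ℂ (OF p f₂ g₂) q (OF p f₁ g₁ q) =
      (0, p.derivative.derivative.eval q.2.2 * (q.1 * (q.2.2 * f₁ q.1 + g₁ q.1))
            * (q.2.2 * f₂ q.1 + g₂ q.1)
          + p.derivative.eval q.2.2 * ((q.1 * (q.2.2 * f₁ q.1 + g₁ q.1)) * f₂ q.1),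
        q.1 * ((q.1 * (q.2.2 * f₁ q.1 + g₁ q.1)) * f₂ q.1)) :=
    OF_fderiv_apply p f₂ g₂ hf₂ hg₂ q _ _
  have e2 : fderiv ℂ (OF p f₁ g₁) q (OF p f₂ g₂ q) =
      (0, p.derivative.derivative.eval q.2.2 * (q.1 * (q.2.2 * f₂ q.1 + g₂ q.1))
            * (q.2.2 * f₁ q.1 + g₁ q.1)
          + p.derivative.eval q.2.2 * ((q.1 * (q.2.2 * f₂ q.1 + g₂ q.1)) * f₁ q.1),
        q.1 * ((q.1 * (q.2.2 * f₂ q.1 + g₂ q.1)) * f₁ q.1)) :=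
    OF_fderiv_apply p f₁ g₁ hf₁ hg₁ q _ _
  rw [vfBracket, e1, e2, Prod.mk_sub_mk, Prod.mk_sub_mk, Prod.mk.injEq, Prod.mk.injEq]
  refine ⟨by ring, by ring, by ring⟩

/-- Two overshear fields `OF_{f₁,g₁}` and `OF_{f₂,g₂}` commute if and only if
`f₁ g₂ − f₂ g₁ ≡ 0`. -/
theorem OF_commute_iff (p : Polynomial ℂ) (f₁ g₁ f₂ g₂ : ℂ → ℂ)
    (hf₁ : Differentiable ℂ f₁) (hg₁ : Differentiable ℂ g₁)
    (hf₂ : Differentiable ℂ f₂) (hg₂ : Differentiable ℂ g₂) :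
    (∀ q : ℂ × ℂ × ℂ, vfBracket (OF p f₁ g₁) (OF p f₂ g₂) q = 0) ↔
      ∀ x : ℂ, f₁ x * g₂ x - f₂ x * g₁ x = 0 := by
  constructor
  · intro h
    have key : ∀ x : ℂ, x ≠ 0 → f₁ x * g₂ x - f₂ x * g₁ x = 0 := by
      intro x hx
      have h3 := congrArg (fun w : ℂ × ℂ × ℂ => w.2.2) (h (x, 0, 0))
      rw [OF_bracket_eval p f₁ g₁ f₂ g₂ hf₁ hg₁ hf₂ hg₂] at h3
      simp only [Prod.snd_zero] at h3
      have := neg_eq_zero.mp h3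
      rcases mul_eq_zero.mp this with h' | h'
      · exact absurd (by rcases mul_eq_zero.mp h' with h'' | h'' <;> exact h'') hx
      · exact h'
    intro x
    have hm : Continuous fun x => f₁ x * g₂ x - f₂ x * g₁ x :=
      ((hf₁.continuous.mul hg₂.continuous).sub (hf₂.continuous.mul hg₁.continuous))
    have heq : (fun x => f₁ x * g₂ x - f₂ x * g₁ x) = fun _ => (0:ℂ) :=
      Continuous.ext_on (dense_compl_singleton (0:ℂ)) hm continuous_const
        (fun y hy => key y hy)
    exact congrFun heq x
  · intro h q
    rw [OF_bracket_eval p f₁ g₁ f₂ g₂ hf₁ hg₁ hf₂ hg₂, h q.1]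
    simp [Prod.ext_iff]
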